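/- For every prime quadratic module M in M_n(R), a symmetric matrix A = [a_ij] belongs to supp M = M ∩ (−M) if and only if all entries a_ij belong to the prime ideal p(supp M); that is, supp M = S_n(p(supp M)). -/

import Mathlib

open Matrix

/-- A quadratic module in `M_n(R)`. -/
def IsQM {n : ℕ} {R : Type*} [CommRing R] (M : Set (Matrix (Fin n) (Fin n) R)) : Prop :=
  (∀ A ∈ M, A.IsSymm) ∧ (1 : Matrix (Fin n) (Fin n) R) ∈ M ∧
  (∀ a ∈ M, ∀ b ∈ M, a + b ∈ M) ∧
  ∀ (A : Matrix (Fin n) (Fin n) R), ∀ m ∈ M, Aᵀ * m * A ∈ M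

/-- A prime quadratic module in `M_n(R)`. -/
def IsPrimeQM {n : ℕ} {R : Type*} [CommRing R] (M : Set (Matrix (Fin n) (Fin n) R)) : Prop :=
  IsQM M ∧ -(1 : Matrix (Fin n) (Fin n) R) ∉ M ∧
  ∀ (A : Matrix (Fin n) (Fin n) R) (r : R), A.IsSymm → r ^ 2 • A ∈ M →
    A ∈ M ∨ r • (1 : Matrix (Fin n) (Fin n) R) ∈ M ∩ (-M)

/-! The support `M ∩ -M` is an additive group closed under congruences `X ↦ Pᵀ X P`,
hence under the polarizations `Pᵀ X Q + Qᵀ X P`. Summing the congruences of `X` by the `n` matrices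
whose only nonzero column is `v` gives `(vᵀ X v) • 1`; with `v = eᵢ` this shows
`a • 1 ∈ M ∩ -M ↔ a ∈ p(M ∩ -M)`. Conversely every symmetric matrix whose entries `a` satisfy
`a • 1 ∈ M ∩ -M` is a sum of polarizations of these scalar matrices. For an off-diagonal entry
`a = A i j` of `A ∈ M ∩ -M`, polarization gives `a² • C ∈ M ∩ -M` with `C = Eᵢⱼ + Eⱼᵢ`; primeness
applied to `-C` yields `a • 1 ∈ M ∩ -M`, since `-C ∈ M` would give `(-2) • 1 ∈ M` and then
`-1 = 1 + (-2) • 1 ∈ M`. -/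

theorem Matrix.sum_transpose_vecMulVec_single_mul_mul {ι R : Type*} [Fintype ι] [DecidableEq ι]
    [CommSemiring R] (X : Matrix ι ι R) (v : ι → R) :
    ∑ k, (vecMulVec v (Pi.single k 1))ᵀ * X * vecMulVec v (Pi.single k 1) =
      (v ⬝ᵥ X *ᵥ v) • (1 : Matrix ι ι R) := by
  ext a b
  simp only [vecMulVec, Pi.single_apply, mul_ite, mul_one, mul_zero, sum_apply, mul_apply,
    transpose_apply, of_apply, ite_mul, zero_mul, Finset.sum_ite_irrel, Finset.sum_const_zero,
    Finset.sum_mul, Finset.sum_ite_eq, Finset.mem_univ, ↓reduceIte, dotProduct, mulVec,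
    Finset.mul_sum, smul_apply, one_apply, smul_eq_mul]
  rw [Finset.sum_comm]
  simp only [mul_comm, mul_left_comm]

theorem Matrix.IsSymm.mem_of_single_add_single_mem {ι α : Type*} [Fintype ι] [LinearOrder ι]
    [AddCommMonoid α] {G : AddSubmonoid (Matrix ι ι α)} {A : Matrix ι ι α} (hA : A.IsSymm)
    (hdiag : ∀ i, single i i (A i i) ∈ G)
    (hoff : ∀ i j, i < j → single i j (A i j) + single j i (A i j) ∈ G) : A ∈ G := by
  have hsum : A = ∑ i, ∑ j,
      (single i j (if i ≤ j then A i j else 0) + single j i (if i < j then A i j else 0)) := by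
    ext u v
    simp only [Matrix.sum_apply, Matrix.add_apply, Matrix.single_apply, ite_and,
      Finset.sum_add_distrib, Finset.sum_ite_irrel, Finset.sum_const_zero, Finset.sum_ite_eq',
      Finset.mem_univ, if_true]
    rcases le_or_gt u v with h | h
    · simp [h, h.not_gt]
    · simp [h, h.not_ge, hA.apply u v]
  rw [hsum]
  refine G.sum_mem fun i _ => G.sum_mem fun j _ => ?_
  rcases lt_trichotomy i j with h | rfl | h
  · simpa [h.le, h] using hoff i j h
  · simpa using hdiag i
  · simp [h.not_ge, h.not_gt, G.zero_mem]

namespace IsQM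

variable {n : ℕ} {R : Type*} [CommRing R] {M : Set (Matrix (Fin n) (Fin n) R)}

theorem isSymm_of_mem (hM : IsQM M) {X : Matrix (Fin n) (Fin n) R} (hX : X ∈ M) : X.IsSymm :=
  hM.1 X hX

theorem one_mem (hM : IsQM M) : (1 : Matrix (Fin n) (Fin n) R) ∈ M := hM.2.1

theorem add_mem (hM : IsQM M) {X Y : Matrix (Fin n) (Fin n) R} (hX : X ∈ M) (hY : Y ∈ M) :
    X + Y ∈ M :=
  hM.2.2.1 X hX Y hY

theorem transpose_mul_mul_mem (hM : IsQM M) (P : Matrix (Fin n) (Fin n) R)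
    {X : Matrix (Fin n) (Fin n) R} (hX : X ∈ M) : Pᵀ * X * P ∈ M :=
  hM.2.2.2 P X hX

theorem zero_mem (hM : IsQM M) : (0 : Matrix (Fin n) (Fin n) R) ∈ M := by
  simpa using hM.transpose_mul_mul_mem 0 hM.one_mem

def supportAddSubgroup (hM : IsQM M) : AddSubgroup (Matrix (Fin n) (Fin n) R) where
  carrier := M ∩ -M
  add_mem' hX hY := ⟨hM.add_mem hX.1 hY.1, by
    rw [Set.mem_neg, neg_add]
    exact hM.add_mem hX.2 hY.2⟩
  zero_mem' := ⟨hM.zero_mem, by simpa using hM.zero_mem⟩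
  neg_mem' {X} hX := ⟨hX.2, by simpa [Set.mem_neg] using hX.1⟩

theorem transpose_mul_mul_mem_support (hM : IsQM M) (P : Matrix (Fin n) (Fin n) R)
    {X : Matrix (Fin n) (Fin n) R} (hX : X ∈ M ∩ -M) : Pᵀ * X * P ∈ M ∩ -M :=
  ⟨hM.transpose_mul_mul_mem P hX.1, by simpa [Set.mem_neg] using hM.transpose_mul_mul_mem P hX.2⟩

theorem polar_mem_support (hM : IsQM M) (P Q : Matrix (Fin n) (Fin n) R)
    {X : Matrix (Fin n) (Fin n) R} (hX : X ∈ M ∩ -M) : Pᵀ * X * Q + Qᵀ * X * P ∈ M ∩ -M := by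
  have hpolar : Pᵀ * X * Q + Qᵀ * X * P =
      (P + Q)ᵀ * X * (P + Q) - Pᵀ * X * P - Qᵀ * X * Q := by
    rw [transpose_add]
    noncomm_ring
  rw [hpolar]
  exact hM.supportAddSubgroup.sub_mem (hM.supportAddSubgroup.sub_mem
    (hM.transpose_mul_mul_mem_support _ hX) (hM.transpose_mul_mul_mem_support _ hX))
    (hM.transpose_mul_mul_mem_support _ hX)

theorem dotProduct_mulVec_smul_one_mem (hM : IsQM M) {X : Matrix (Fin n) (Fin n) R} (hX : X ∈ M)
    (v : Fin n → R) : (v ⬝ᵥ X *ᵥ v) • (1 : Matrix (Fin n) (Fin n) R) ∈ M := by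
  rw [← sum_transpose_vecMulVec_single_mul_mul]
  exact Finset.sum_induction _ (· ∈ M) (fun _ _ => hM.add_mem) hM.zero_mem
    fun k _ => hM.transpose_mul_mul_mem _ hX

theorem diag_smul_one_mem_support (hM : IsQM M) {X : Matrix (Fin n) (Fin n) R}
    (hX : X ∈ M ∩ -M) (i : Fin n) : X i i • (1 : Matrix (Fin n) (Fin n) R) ∈ M ∩ -M := by
  constructor
  · simpa using hM.dotProduct_mulVec_smul_one_mem hX.1 (Pi.single i 1)
  · simpa [Set.mem_neg] using hM.dotProduct_mulVec_smul_one_mem hX.2 (Pi.single i 1)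

theorem smul_one_mem_support_iff [NeZero n] (hM : IsQM M) {a : R} :
    a • (1 : Matrix (Fin n) (Fin n) R) ∈ M ∩ -M ↔
      a ∈ (fun B : Matrix (Fin n) (Fin n) R => B 0 0) '' (M ∩ -M) := by
  refine ⟨fun ha => ⟨_, ha, by simp⟩, ?_⟩
  rintro ⟨B, hB, rfl⟩
  exact hM.diag_smul_one_mem_support hB 0

theorem mem_support_of_isSymm (hM : IsQM M) {A : Matrix (Fin n) (Fin n) R} (hA : A.IsSymm)
    (hentries : ∀ i j, A i j • (1 : Matrix (Fin n) (Fin n) R) ∈ M ∩ -M) : A ∈ M ∩ -M := by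
  refine hA.mem_of_single_add_single_mem (G := hM.supportAddSubgroup.toAddSubmonoid)
    (fun i => ?_) (fun i j _ => ?_)
  · show _ ∈ M ∩ -M
    convert hM.transpose_mul_mul_mem_support (single i i 1) (hentries i i) using 1
    simp
  · show _ ∈ M ∩ -M
    convert hM.polar_mem_support (single i i 1) (single i j 1) (hentries i j) using 1
    simp

theorem neg_single_add_single_notMem (hM : IsQM M) (hneg : -(1 : Matrix (Fin n) (Fin n) R) ∉ M)
    {i j : Fin n} (hij : i ≠ j) : -(single i j 1 + single j i 1 : Matrix (Fin n) (Fin n) R) ∉ M := by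
  intro hC
  have htwo := hM.dotProduct_mulVec_smul_one_mem hC (Pi.single i 1 + Pi.single j 1)
  have hval : (Pi.single i 1 + Pi.single j 1) ⬝ᵥ
      (-(single i j 1 + single j i 1) : Matrix (Fin n) (Fin n) R) *ᵥ
        (Pi.single i 1 + Pi.single j 1) = -2 := by
    norm_num [mulVec_add, dotProduct_add, add_dotProduct, hij, hij.symm]
  refine hneg ?_
  convert hM.add_mem hM.one_mem (hval ▸ htwo) using 1
  module

end IsQM

theorem IsPrimeQM.smul_one_mem_support {n : ℕ} {R : Type*} [CommRing R]
    {M : Set (Matrix (Fin n) (Fin n) R)} (hM : IsPrimeQM M) {A : Matrix (Fin n) (Fin n) R}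
    (hA : A ∈ M ∩ -M) (i j : Fin n) : A i j • (1 : Matrix (Fin n) (Fin n) R) ∈ M ∩ -M := by
  obtain ⟨hQM, hneg, hprime⟩ := hM
  obtain rfl | hij := eq_or_ne i j
  · exact hQM.diag_smul_one_mem_support hA i
  set C : Matrix (Fin n) (Fin n) R := single i j 1 + single j i 1
  have hCsymm : (-C).IsSymm := by simp [C, IsSymm, add_comm]
  have hpolar : A i j ^ 2 • C ∈ M ∩ -M := by
    convert hQM.polar_mem_support (single i i 1) (single j j (A i j)) hA using 1
    simp [C, (hQM.isSymm_of_mem hA.1).apply i j, sq]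
  refine (hprime (-C) (A i j) hCsymm ?_).resolve_left (hQM.neg_single_add_single_notMem hneg hij)
  simpa [Set.mem_neg] using hpolar.2

theorem stmt10 {n : ℕ} [NeZero n] {R : Type*} [CommRing R]
    (M : Set (Matrix (Fin n) (Fin n) R)) (hM : IsPrimeQM M) :
    M ∩ (-M) = {A : Matrix (Fin n) (Fin n) R | A.IsSymm ∧
      ∀ i j, A i j ∈ (fun B : Matrix (Fin n) (Fin n) R => B 0 0) '' (M ∩ (-M))} := by
  have hQM : IsQM M := hM.1
  ext A
  refine ⟨fun hA => ⟨hQM.isSymm_of_mem hA.1, fun i j => ?_⟩, fun ⟨hA, hentries⟩ => ?_⟩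
  · exact hQM.smul_one_mem_support_iff.1 (hM.smul_one_mem_support hA i j)
  · exact hQM.mem_support_of_isSymm hA fun i j => hQM.smul_one_mem_support_iff.2 (hentries i j)
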